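/- arXiv:1909.10179 — 3 statements merged into one kernel-verified Lean document; each statement's English description precedes it below -/
import Mathlib

section
/- Suppose A(t) = F g(t) for all t ≥ 0, and fix gains k_P > B_ξ + B_b and k_I > 0. Then there exist constants a > 0 and C > 0 such that for every differentiable solution (Ā, b̄) : [0,∞) → ℝ^{n×n} × 𝔤 of the observer equations Ā'(t) = Ā(t) ξ_m(t) − A(t) b̄(t) + k_P (A(t) − Ā(t)) and b̄'(t) = −k_I π_𝔤(A(t)ᵀ (A(t) − Ā(t))), the errors E_g(t) = g(t) − F⁻¹ Ā(t) and e_b(t) = b − b̄(t) satisfy ‖E_g(t)‖ + ‖e_b(t)‖ ≤ C (‖E_g(0)‖ + ‖e_b(0)‖) e^{−a t} for all t ≥ 0, with a and C independent of the initial condition (Ā(0), b̄(0)) ∈ ℝ^{n×n} × 𝔤. -/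
/-!
With `P = F E_g = A - Ā` and `e = b - b̄` the error system is
`P' = P ξ_m - A e - k_P P`, `e' = k_I π_𝔤 (Aᵀ P)`, where `A' = A ξ`. Along it,
`‖P‖²/2 + ‖e‖²/(2 k_I)` has derivative `⟪P, P ξ_m⟫ - k_P ‖P‖² ≤ -(k_P - B_ξ - B_b) ‖P‖²`, since the
terms `∓⟪P, A e⟫` cancel (`e ∈ 𝔤` and `π_𝔤` is self-adjoint). To make `e` decay as well, add
`ε ⟪P, A e⟫`: its derivative contributes `-ε ‖A e‖² ≤ -ε L² ‖e‖²`, where `L > 0` bounds the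
singular values of `A = F g` from below, and otherwise only terms of size `‖P‖²` and `‖P‖ ‖e‖`,
which Young's inequality absorbs. For small `ε` the perturbed function is comparable to
`‖P‖² + ‖e‖²/k_I` and its derivative is at most a negative multiple of it, so Grönwall gives
exponential decay with constants that depend only on the bounds.
-/

open Matrix

attribute [local instance] Matrix.frobeniusNormedAddCommGroup Matrix.frobeniusNormedSpace
attribute [local instance] LieRing.ofAssociativeRing

/-- Frobenius inner product `⟨A,B⟩ = tr(Aᵀ B)` on real square matrices. -/
noncomputable def finner {n : ℕ} (A B : Matrix (Fin n) (Fin n) ℝ) : ℝ := (Aᵀ * B).trace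

/-- Minimum singular value: the infimum of `‖M x‖` over unit vectors `x`. -/
noncomputable def sigmaMin {n : ℕ} (M : Matrix (Fin n) (Fin n) ℝ) : ℝ :=
  sInf ((fun x : EuclideanSpace ℝ (Fin n) => ‖(Matrix.toEuclideanCLM (𝕜 := ℝ) M) x‖) '' {x | ‖x‖ = 1})

/-- Maximum singular value: the supremum of `‖M x‖` over unit vectors `x`. -/
noncomputable def sigmaMax {n : ℕ} (M : Matrix (Fin n) (Fin n) ℝ) : ℝ :=
  sSup ((fun x : EuclideanSpace ℝ (Fin n) => ‖(Matrix.toEuclideanCLM (𝕜 := ℝ) M) x‖) '' {x | ‖x‖ = 1})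

/-- Minimum eigenvalue of a symmetric matrix, via the Rayleigh quotient. -/
noncomputable def lambdaMin {n : ℕ} (M : Matrix (Fin n) (Fin n) ℝ) : ℝ :=
  sInf ((fun x : EuclideanSpace ℝ (Fin n) =>
    inner (𝕜 := ℝ) x ((Matrix.toEuclideanCLM (𝕜 := ℝ) M) x)) '' {x | ‖x‖ = 1})

open Real InnerProductSpace Topology

lemma le_mul_exp_of_hasDerivAt_le {V V' : ℝ → ℝ} {c : ℝ}
    (hV : ∀ t ≥ 0, HasDerivAt V (V' t) t) (hle : ∀ t ≥ 0, V' t ≤ c * V t) :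
    ∀ t ≥ 0, V t ≤ V 0 * exp (c * t) := by
  have hderiv : ∀ t ≥ 0, HasDerivAt (fun s => V s * exp (-(c * s)))
      ((V' t - c * V t) * exp (-(c * t))) t := by
    intro t ht
    refine ((hV t ht).fun_mul ((hasDerivAt_id t).const_mul c).neg.exp).congr_deriv ?_
    simp only [id, mul_one, Pi.neg_apply]
    ring
  have hanti : AntitoneOn (fun s => V s * exp (-(c * s))) (Set.Ici 0) := by
    refine antitoneOn_of_hasDerivWithinAt_nonpos
      (f' := fun t => (V' t - c * V t) * exp (-(c * t))) (convex_Ici 0)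
      (fun t ht => (hderiv t ht).continuousAt.continuousWithinAt) (fun t ht => ?_)
      (fun t ht => ?_) <;> rw [interior_Ici] at ht
    · exact (hderiv t ht.le).hasDerivWithinAt
    · exact mul_nonpos_of_nonpos_of_nonneg (sub_nonpos.2 (hle t ht.le)) (exp_pos _).le
  intro t ht
  have h := hanti (Set.mem_Ici.2 le_rfl) ht ht
  simp only [mul_zero, neg_zero, exp_zero, mul_one] at h
  rwa [Real.exp_neg, ← div_eq_mul_inv, div_le_iff₀ (exp_pos _)] at h

lemma mul_mul_le_of_four_mul_sq_le {u k x y : ℝ} (hk : 0 < k) (hu : 4 * k * u ^ 2 ≤ 1) :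
    u * (x * y) ≤ (x ^ 2 + y ^ 2 / k) / 4 := by
  have h : 4 * k * (u * (x * y)) ≤ k * x ^ 2 + y ^ 2 := by
    nlinarith [sq_nonneg (y - 2 * k * u * x),
      mul_le_mul_of_nonneg_right hu (by positivity : 0 ≤ k * x ^ 2)]
  rw [show (x ^ 2 + y ^ 2 / k) / 4 = (k * x ^ 2 + y ^ 2) / (4 * k) by field_simp,
    le_div_iff₀ (by positivity)]
  linarith

lemma add_le_of_sq_add_sq_div_le {x y x₀ y₀ k r : ℝ} (hk : 0 < k)
    (hx₀ : 0 ≤ x₀) (hy₀ : 0 ≤ y₀) (hr : 0 ≤ r)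
    (h : x ^ 2 + y ^ 2 / k ≤ 3 * (x₀ ^ 2 + y₀ ^ 2 / k) * r ^ 2) :
    x + y ≤ 3 * max k k⁻¹ * (x₀ + y₀) * r := by
  set μ := max k k⁻¹
  have hμ : 1 ≤ μ := by
    rcases le_total 1 k with hk1 | hk1
    · exact le_max_of_le_left hk1
    · exact le_max_of_le_right ((one_le_inv₀ hk).2 hk1)
  have hkμ : k ≤ μ := le_max_left _ _
  have hkμ' : k⁻¹ ≤ μ := le_max_right _ _
  have hnorm : x ^ 2 + y ^ 2 ≤ μ * (x ^ 2 + y ^ 2 / k) := by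
    have : y ^ 2 = k * (y ^ 2 / k) := by field_simp
    nlinarith [mul_le_mul_of_nonneg_right hkμ (by positivity : 0 ≤ y ^ 2 / k),
      mul_le_mul_of_nonneg_right hμ (sq_nonneg x)]
  have hnorm₀ : x₀ ^ 2 + y₀ ^ 2 / k ≤ μ * (x₀ ^ 2 + y₀ ^ 2) := by
    rw [div_eq_inv_mul]
    nlinarith [mul_le_mul_of_nonneg_right hkμ' (sq_nonneg y₀),
      mul_le_mul_of_nonneg_right hμ (sq_nonneg x₀)]
  have hsq : x ^ 2 + y ^ 2 ≤ μ * (3 * (μ * (x₀ ^ 2 + y₀ ^ 2)) * r ^ 2) :=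
    hnorm.trans (mul_le_mul_of_nonneg_left (h.trans (by gcongr)) (by linarith))
  refine le_of_pow_le_pow_left₀ two_ne_zero (by positivity) ?_
  calc (x + y) ^ 2 ≤ 2 * (x ^ 2 + y ^ 2) := by nlinarith [sq_nonneg (x - y)]
    _ ≤ 2 * (μ * (3 * (μ * (x₀ ^ 2 + y₀ ^ 2)) * r ^ 2)) := by gcongr
    _ ≤ (3 * μ * (x₀ + y₀) * r) ^ 2 := by
      have : 0 ≤ μ ^ 2 * r ^ 2 * (x₀ * y₀) := by positivity
      nlinarith [sq_nonneg μ]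

lemma add_le_max_mul_add {x x' y κ : ℝ} (hx : x ≤ κ * x') (hx' : 0 ≤ x') (hy : 0 ≤ y) :
    x + y ≤ max κ 1 * (x' + y) := by
  nlinarith [mul_le_mul_of_nonneg_right (le_max_left κ 1) hx',
    mul_le_mul_of_nonneg_right (le_max_right κ 1) hy]

section Matrices

attribute [local instance] Matrix.frobeniusNormedRing Matrix.frobeniusNormedAlgebra

noncomputable local instance Matrix.frobeniusInnerProductSpace {n : ℕ} :
    InnerProductSpace ℝ (Matrix (Fin n) (Fin n) ℝ) where
  inner A B := ∑ i, ∑ j, A i j * B i j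
  norm_sq_eq_re_inner A := by
    rw [Matrix.frobenius_norm_def, ← Real.sqrt_eq_rpow, Real.sq_sqrt (by positivity)]
    simp [sq]
  conj_inner_symm A B := by
    simp only [starRingEnd_apply, star_trivial, mul_comm]
  add_left A B C := by
    simp only [Matrix.add_apply, add_mul, Finset.sum_add_distrib]
  smul_left A B r := by
    simp only [Matrix.smul_apply, smul_eq_mul, starRingEnd_apply, star_trivial, Finset.mul_sum,
      mul_assoc]

variable {n : ℕ}

local notation "Mat" => Matrix (Fin n) (Fin n) ℝ

lemma finner_eq_inner (A B : Mat) : finner A B = ⟪A, B⟫_ℝ := by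
  simp only [finner, Matrix.trace, Matrix.diag, Matrix.mul_apply, Matrix.transpose_apply]
  exact Finset.sum_comm

lemma inner_mul_left_eq_inner_transpose_mul (M X Y : Mat) : ⟪M * X, Y⟫_ℝ = ⟪X, Mᵀ * Y⟫_ℝ := by
  simp only [← finner_eq_inner, finner, Matrix.transpose_mul, Matrix.mul_assoc]

lemma frobenius_norm_mul_sq_eq_sum (M X : Mat) :
    ‖M * X‖ ^ 2 = ∑ j, ‖Matrix.toEuclideanCLM (𝕜 := ℝ) M (WithLp.toLp 2 (Xᵀ j))‖ ^ 2 := by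
  rw [← real_inner_self_eq_norm_sq]
  simp only [Matrix.toEuclideanCLM_toLp, EuclideanSpace.norm_sq_eq, Real.norm_eq_abs, sq_abs]
  simp only [sq]
  exact Finset.sum_comm

lemma frobenius_norm_sq_eq_sum (X : Mat) : ‖X‖ ^ 2 = ∑ j, ‖WithLp.toLp 2 (Xᵀ j)‖ ^ 2 := by
  simpa using frobenius_norm_mul_sq_eq_sum 1 X

lemma sigmaMin_nonneg (M : Mat) : 0 ≤ sigmaMin M :=
  Real.sInf_nonneg <| by rintro _ ⟨_, -, rfl⟩; positivity

lemma sigmaMax_nonneg (M : Mat) : 0 ≤ sigmaMax M :=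
  Real.sSup_nonneg <| by rintro _ ⟨_, -, rfl⟩; positivity

lemma sigmaMin_mul_norm_le_norm_apply (M : Mat) (v : EuclideanSpace ℝ (Fin n)) :
    sigmaMin M * ‖v‖ ≤ ‖Matrix.toEuclideanCLM (𝕜 := ℝ) M v‖ := by
  rcases eq_or_ne v 0 with rfl | hv
  · simp
  have hunit : sigmaMin M ≤ ‖Matrix.toEuclideanCLM (𝕜 := ℝ) M ((‖v‖⁻¹ : ℝ) • v)‖ :=
    csInf_le ⟨0, by rintro _ ⟨_, -, rfl⟩; positivity⟩ ⟨_, norm_smul_inv_norm hv, rfl⟩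
  rwa [map_smul, norm_smul, norm_inv, norm_norm, inv_mul_eq_div, le_div_iff₀ (by positivity)]
    at hunit

lemma norm_apply_le_sigmaMax_mul (M : Mat) (v : EuclideanSpace ℝ (Fin n)) :
    ‖Matrix.toEuclideanCLM (𝕜 := ℝ) M v‖ ≤ sigmaMax M * ‖v‖ := by
  rcases eq_or_ne v 0 with rfl | hv
  · simp
  have hbdd : BddAbove ((fun x : EuclideanSpace ℝ (Fin n) =>
      ‖(Matrix.toEuclideanCLM (𝕜 := ℝ) M) x‖) '' {x | ‖x‖ = 1}) := by
    refine ⟨‖Matrix.toEuclideanCLM (𝕜 := ℝ) M‖, ?_⟩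
    rintro _ ⟨x, hx, rfl⟩
    simpa [show ‖x‖ = 1 from hx] using (Matrix.toEuclideanCLM (𝕜 := ℝ) M).le_opNorm x
  have hunit : ‖Matrix.toEuclideanCLM (𝕜 := ℝ) M ((‖v‖⁻¹ : ℝ) • v)‖ ≤ sigmaMax M :=
    le_csSup hbdd ⟨_, norm_smul_inv_norm hv, rfl⟩
  rwa [map_smul, norm_smul, norm_inv, norm_norm, inv_mul_eq_div, div_le_iff₀ (by positivity)]
    at hunit

lemma sigmaMin_mul_norm_le_norm_mul (M X : Mat) : sigmaMin M * ‖X‖ ≤ ‖M * X‖ := by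
  refine le_of_pow_le_pow_left₀ two_ne_zero (norm_nonneg _) ?_
  rw [mul_pow, frobenius_norm_sq_eq_sum, frobenius_norm_mul_sq_eq_sum, Finset.mul_sum]
  gcongr with j
  rw [← mul_pow]
  gcongr
  · exact mul_nonneg (sigmaMin_nonneg M) (norm_nonneg _)
  · exact sigmaMin_mul_norm_le_norm_apply M _

lemma norm_mul_le_sigmaMax_mul (M X : Mat) : ‖M * X‖ ≤ sigmaMax M * ‖X‖ := by
  refine le_of_pow_le_pow_left₀ two_ne_zero (mul_nonneg (sigmaMax_nonneg M) (norm_nonneg _)) ?_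
  rw [mul_pow, frobenius_norm_mul_sq_eq_sum, frobenius_norm_sq_eq_sum X, Finset.mul_sum]
  gcongr with j
  rw [← mul_pow]
  gcongr
  exact norm_apply_le_sigmaMax_mul M _

lemma starProjection_eq_of_finner_eq_zero (K : Submodule ℝ Mat) {proj : Mat → Mat}
    (hmem : ∀ X, proj X ∈ K) (horth : ∀ X, ∀ Y ∈ K, finner (X - proj X) Y = 0) (X : Mat) :
    K.starProjection X = proj X :=
  Submodule.eq_starProjection_of_mem_of_inner_eq_zero (hmem X) fun Y hY => by
    rw [← finner_eq_inner]
    exact horth X Y hY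

noncomputable def observerLyapunov (kI ε : ℝ) (A P e : Mat) : ℝ :=
  ‖P‖ ^ 2 / 2 + ‖e‖ ^ 2 / (2 * kI) + ε * ⟪P, A * e⟫_ℝ

noncomputable def observerLyapunovDeriv (K : Submodule ℝ Mat) (kP kI ε : ℝ) (A ξ ξm P e : Mat) :
    ℝ :=
  ⟪P, P * ξm⟫_ℝ - kP * ‖P‖ ^ 2 + ε * (⟪P * ξm, A * e⟫_ℝ - ‖A * e‖ ^ 2 - kP * ⟪P, A * e⟫_ℝ
    + ⟪P, A * ξ * e⟫_ℝ + kI * ⟪P, A * K.starProjection (Aᵀ * P)⟫_ℝ)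

variable {K : Submodule ℝ (Matrix (Fin n) (Fin n) ℝ)}

lemma hasDerivAt_observerLyapunov {kP kI ε t : ℝ} {A ξ ξm P e : ℝ → Mat} (hkI : kI ≠ 0)
    (hA : HasDerivAt A (A t * ξ t) t)
    (hP : HasDerivAt P (P t * ξm t - A t * e t - kP • P t) t)
    (he : HasDerivAt e (kI • K.starProjection ((A t)ᵀ * P t)) t) (heK : e t ∈ K) :
    HasDerivAt (fun s => observerLyapunov kI ε (A s) (P s) (e s))
      (observerLyapunovDeriv K kP kI ε (A t) (ξ t) (ξm t) (P t) (e t)) t := by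
  -- cancels the term `-⟪P, A e⟫` coming from `‖P‖ ^ 2 / 2`
  have hcross : ⟪e t, K.starProjection ((A t)ᵀ * P t)⟫_ℝ = ⟪P t, A t * e t⟫_ℝ := by
    rw [← Submodule.inner_starProjection_left_eq_right, Submodule.starProjection_eq_self_iff.2 heK,
      ← inner_mul_left_eq_inner_transpose_mul, real_inner_comm]
  refine (((hP.norm_sq.div_const 2).add (he.norm_sq.div_const (2 * kI))).add
    ((hP.inner ℝ (hA.mul he)).const_mul ε)).congr_deriv ?_
  simp only [observerLyapunovDeriv, inner_add_right, inner_sub_left, inner_sub_right,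
    real_inner_smul_left, real_inner_smul_right, real_inner_self_eq_norm_sq, hcross,
    Matrix.mul_smul, Pi.mul_apply]
  field_simp
  ring

lemma abs_observerLyapunov_sub_le {A P e : Mat} {M kI ε : ℝ} (hkI : 0 < kI) (hε : 0 ≤ ε)
    (hA : ‖A‖ ≤ M) (hεM : 4 * kI * (ε * M) ^ 2 ≤ 1) :
    |observerLyapunov kI ε A P e - (‖P‖ ^ 2 + ‖e‖ ^ 2 / kI) / 2|
      ≤ (‖P‖ ^ 2 + ‖e‖ ^ 2 / kI) / 4 := by
  have hcross : |ε * ⟪P, A * e⟫_ℝ| ≤ ε * M * (‖P‖ * ‖e‖) := by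
    rw [abs_mul, abs_of_nonneg hε, mul_assoc]
    gcongr
    calc |⟪P, A * e⟫_ℝ| ≤ ‖P‖ * ‖A * e‖ := abs_real_inner_le_norm _ _
      _ ≤ ‖P‖ * (M * ‖e‖) := by gcongr; exact norm_mul_le_of_le hA le_rfl
      _ = M * (‖P‖ * ‖e‖) := by ring
  calc |observerLyapunov kI ε A P e - (‖P‖ ^ 2 + ‖e‖ ^ 2 / kI) / 2|
      = |ε * ⟪P, A * e⟫_ℝ| := by congr 1; simp only [observerLyapunov]; field_simp; ring
    _ ≤ _ := hcross.trans (mul_mul_le_of_four_mul_sq_le hkI hεM)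

lemma observerLyapunovDeriv_le {A ξ ξm P e : Mat} {kP kI ε M L Bξ m : ℝ}
    (hkP : 0 ≤ kP) (hkI : 0 ≤ kI) (hε : 0 ≤ ε) (hA : ‖A‖ ≤ M) (hL : 0 ≤ L)
    (hAe : L * ‖e‖ ≤ ‖A * e‖) (hξ : ‖ξ‖ ≤ Bξ) (hξm : ‖ξm‖ ≤ m) :
    observerLyapunovDeriv K kP kI ε A ξ ξm P e ≤ -(kP - m) * ‖P‖ ^ 2
      + ε * (kI * M ^ 2 * ‖P‖ ^ 2 + M * (m + kP + Bξ) * (‖P‖ * ‖e‖) - L ^ 2 * ‖e‖ ^ 2) := by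
  have hinner {X Y : Mat} {r : ℝ} (h : ‖Y‖ ≤ r) : ⟪X, Y⟫_ℝ ≤ ‖X‖ * r :=
    (real_inner_le_norm X Y).trans (by gcongr)
  have hm : 0 ≤ m := (norm_nonneg _).trans hξm
  have h1 : ⟪P, P * ξm⟫_ℝ ≤ ‖P‖ * (‖P‖ * m) := hinner (norm_mul_le_of_le le_rfl hξm)
  have h2 : ⟪P * ξm, A * e⟫_ℝ ≤ ‖P‖ * m * (M * ‖e‖) :=
    (real_inner_le_norm _ _).trans <| mul_le_mul (norm_mul_le_of_le le_rfl hξm)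
      (norm_mul_le_of_le hA le_rfl) (norm_nonneg _) (mul_nonneg (norm_nonneg _) hm)
  have h3 : (L * ‖e‖) ^ 2 ≤ ‖A * e‖ ^ 2 := by gcongr
  have h4 : -⟪P, A * e⟫_ℝ ≤ ‖P‖ * (M * ‖e‖) :=
    (neg_le_abs _).trans <| (abs_real_inner_le_norm _ _).trans <|
      mul_le_mul_of_nonneg_left (norm_mul_le_of_le hA le_rfl) (norm_nonneg _)
  have h5 : ⟪P, A * ξ * e⟫_ℝ ≤ ‖P‖ * (M * Bξ * ‖e‖) :=
    hinner (norm_mul_le_of_le (norm_mul_le_of_le hA hξ) le_rfl)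
  have h6 : ⟪P, A * K.starProjection (Aᵀ * P)⟫_ℝ ≤ ‖P‖ * (M * (M * ‖P‖)) := by
    refine hinner (norm_mul_le_of_le hA ?_)
    refine (K.norm_starProjection_apply_le _).trans (norm_mul_le_of_le ?_ le_rfl)
    rwa [Matrix.frobenius_norm_transpose]
  simp only [observerLyapunovDeriv]
  nlinarith [mul_le_mul_of_nonneg_left h2 hε, mul_le_mul_of_nonneg_left h3 hε,
    mul_le_mul_of_nonneg_left h4 (mul_nonneg hε hkP), mul_le_mul_of_nonneg_left h5 hε,
    mul_le_mul_of_nonneg_left h6 (mul_nonneg hε hkI)]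

lemma observerLyapunovDeriv_le_neg_mul {A ξ ξm P e : Mat} {kP kI ε M L Bξ m a : ℝ}
    (hkI : 0 < kI) (hε : 0 ≤ ε) (hA : ‖A‖ ≤ M) (hL : 0 < L) (hAe : L * ‖e‖ ≤ ‖A * e‖)
    (hξ : ‖ξ‖ ≤ Bξ) (hξm : ‖ξm‖ ≤ m) (hkP : m ≤ kP)
    (hεα : ε * (kI * M ^ 2 + (M * (m + kP + Bξ)) ^ 2 / (2 * L ^ 2)) ≤ (kP - m) / 2)
    (hεM : 4 * kI * (ε * M) ^ 2 ≤ 1) (ha : 0 ≤ a) (haα : a ≤ (kP - m) / 3)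
    (haε : a ≤ ε * L ^ 2 * kI / 3) :
    observerLyapunovDeriv K kP kI ε A ξ ξm P e ≤ -(2 * a) * observerLyapunov kI ε A P e := by
  set c := M * (m + kP + Bξ)
  have hm : 0 ≤ m := (norm_nonneg _).trans hξm
  have hD := observerLyapunovDeriv_le (K := K) (P := P) (hm.trans hkP) hkI.le hε hA hL.le hAe hξ
    hξm
  have hV := (abs_le.1 (abs_observerLyapunov_sub_le (P := P) (e := e) hkI hε hA hεM)).2
  have hyoung : c * (‖P‖ * ‖e‖) ≤ c ^ 2 / (2 * L ^ 2) * ‖P‖ ^ 2 + L ^ 2 / 2 * ‖e‖ ^ 2 := by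
    have h := two_mul_le_add_sq (c * ‖P‖ / L) (L * ‖e‖)
    field_simp at h ⊢
    linarith
  have hx : 3 * a / 2 * ‖P‖ ^ 2 ≤ (kP - m) / 2 * ‖P‖ ^ 2 := by
    gcongr
    linarith
  have hy : 3 * a / 2 * (‖e‖ ^ 2 / kI) ≤ ε * L ^ 2 / 2 * ‖e‖ ^ 2 := by
    have : 3 * a / kI ≤ ε * L ^ 2 := by
      rw [div_le_iff₀ hkI]
      linarith
    calc 3 * a / 2 * (‖e‖ ^ 2 / kI) = 3 * a / kI / 2 * ‖e‖ ^ 2 := by ring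
      _ ≤ ε * L ^ 2 / 2 * ‖e‖ ^ 2 := by gcongr
  nlinarith [mul_le_mul_of_nonneg_left hyoung hε, mul_le_mul_of_nonneg_right hεα (sq_nonneg ‖P‖),
    mul_le_mul_of_nonneg_left hV ha]

theorem observerError_exp_decay {A ξ ξm : ℝ → Mat} {M L Bξ m kP kI : ℝ}
    (hA : ∀ t ≥ 0, HasDerivAt A (A t * ξ t) t) (hAM : ∀ t ≥ 0, ‖A t‖ ≤ M)
    (hL : 0 < L) (hAL : ∀ t ≥ 0, ∀ X, L * ‖X‖ ≤ ‖A t * X‖)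
    (hξ : ∀ t ≥ 0, ‖ξ t‖ ≤ Bξ) (hξm : ∀ t ≥ 0, ‖ξm t‖ ≤ m) (hkP : m < kP) (hkI : 0 < kI) :
    ∃ a > 0, ∃ C > 0, ∀ P e : ℝ → Mat, (∀ t ≥ 0, e t ∈ K) →
      (∀ t ≥ 0, HasDerivAt P (P t * ξm t - A t * e t - kP • P t) t) →
      (∀ t ≥ 0, HasDerivAt e (kI • K.starProjection ((A t)ᵀ * P t)) t) →
      ∀ t ≥ 0, ‖P t‖ + ‖e t‖ ≤ C * (‖P 0‖ + ‖e 0‖) * exp (-(a * t)) := by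
  set c := M * (m + kP + Bξ)
  obtain ⟨ε, ⟨hεα, hεM⟩, hε⟩ : ∃ ε, (ε * (kI * M ^ 2 + c ^ 2 / (2 * L ^ 2)) < (kP - m) / 2 ∧
      4 * kI * (ε * M) ^ 2 < 1) ∧ 0 < ε := by
    have hsmall : ∀ᶠ ε in 𝓝 (0 : ℝ), ε * (kI * M ^ 2 + c ^ 2 / (2 * L ^ 2)) < (kP - m) / 2 ∧
        4 * kI * (ε * M) ^ 2 < 1 :=
      (ContinuousAt.eventually_lt (by fun_prop) continuousAt_const (by simp; linarith)).and
        (ContinuousAt.eventually_lt (by fun_prop) continuousAt_const (by simp))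
    exact ((hsmall.filter_mono nhdsWithin_le_nhds).and self_mem_nhdsWithin).exists (f := 𝓝[>] 0)
  set a := min ((kP - m) / 3) (ε * L ^ 2 * kI / 3)
  have ha : 0 < a := lt_min (by linarith) (by positivity)
  refine ⟨a, ha, 3 * max kI kI⁻¹, by positivity, fun P e heK hP he t ht => ?_⟩
  set V := fun s => observerLyapunov kI ε (A s) (P s) (e s)
  have hVN (s : ℝ) (hs : 0 ≤ s) :=
    abs_le.1 (abs_observerLyapunov_sub_le (P := P s) (e := e s) hkI hε.le (hAM s hs) hεM.le)
  have hVt : V t ≤ V 0 * exp (-(2 * a) * t) := le_mul_exp_of_hasDerivAt_le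
    (fun s hs => hasDerivAt_observerLyapunov hkI.ne' (hA s hs) (hP s hs) (he s hs) (heK s hs))
    (fun s hs => observerLyapunovDeriv_le_neg_mul hkI hε.le (hAM s hs) hL (hAL s hs (e s))
      (hξ s hs) (hξm s hs) hkP.le hεα.le hεM.le ha.le (min_le_left _ _) (min_le_right _ _)) t ht
  refine add_le_of_sq_add_sq_div_le hkI (norm_nonneg _) (norm_nonneg _) (exp_pos _).le ?_
  have hexp : exp (-(a * t)) ^ 2 = exp (-(2 * a) * t) := by rw [← exp_nat_mul]; ring_nf
  have hup := (hVN 0 le_rfl).2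
  have hlow := (hVN t ht).1
  rw [hexp]
  nlinarith [mul_le_mul_of_nonneg_right hup (exp_pos (-(2 * a) * t)).le]

lemma norm_mul_le_of_sigmaMax_le {F G : Mat} {U : ℝ} (hG : sigmaMax G ≤ U) :
    ‖F * G‖ ≤ ‖F‖ * (U * ‖(1 : Mat)‖) := by
  have hG1 : ‖G‖ ≤ U * ‖(1 : Mat)‖ := by
    simpa using (norm_mul_le_sigmaMax_mul G 1).trans (by gcongr)
  exact norm_mul_le_of_le le_rfl hG1

lemma div_mul_norm_le_norm_mul_of_le_sigmaMin {F G : Mat} {c : ℝ} (hF : F⁻¹ * F = 1)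
    (hG : c ≤ sigmaMin G) (X : Mat) : c / (‖F⁻¹‖ + 1) * ‖X‖ ≤ ‖F * G * X‖ := by
  have h : c * ‖X‖ ≤ ‖F⁻¹‖ * ‖F * G * X‖ := by
    calc c * ‖X‖ ≤ sigmaMin G * ‖X‖ := by gcongr
      _ ≤ ‖G * X‖ := sigmaMin_mul_norm_le_norm_mul G X
      _ = ‖F⁻¹ * (F * G * X)‖ := by rw [← Matrix.mul_assoc, ← Matrix.mul_assoc, hF, one_mul]
      _ ≤ ‖F⁻¹‖ * ‖F * G * X‖ := norm_mul_le _ _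
  rw [div_mul_eq_mul_div, div_le_iff₀ (by positivity)]
  nlinarith [norm_nonneg (F * G * X)]

lemma norm_add_le_of_norm_mul_add_le {F : Mat} {E : ℝ → Mat} {y : ℝ → ℝ} {C r t : ℝ}
    (hF : F⁻¹ * F = 1) (hC : 0 ≤ C) (hr : 0 ≤ r) (hy : ∀ s, 0 ≤ y s)
    (h : ‖F * E t‖ + y t ≤ C * (‖F * E 0‖ + y 0) * r) :
    ‖E t‖ + y t ≤ max ‖F⁻¹‖ 1 * C * max ‖F‖ 1 * (‖E 0‖ + y 0) * r := by
  have hFinv : ‖E t‖ ≤ ‖F⁻¹‖ * ‖F * E t‖ := by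
    simpa only [← Matrix.mul_assoc, hF, Matrix.one_mul] using norm_mul_le F⁻¹ (F * E t)
  calc ‖E t‖ + y t ≤ max ‖F⁻¹‖ 1 * (‖F * E t‖ + y t) :=
        add_le_max_mul_add hFinv (norm_nonneg _) (hy t)
    _ ≤ max ‖F⁻¹‖ 1 * (C * (‖F * E 0‖ + y 0) * r) := by gcongr
    _ ≤ max ‖F⁻¹‖ 1 * (C * (max ‖F‖ 1 * (‖E 0‖ + y 0)) * r) := by
        gcongr
        exact add_le_max_mul_add (norm_mul_le _ _) (norm_nonneg _) (hy 0)
    _ = _ := by ring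

lemma hasDerivAt_left_translate {F : Mat} {g ξ : ℝ → Mat} {t : ℝ}
    (hg : HasDerivAt g (g t * ξ t) t) : HasDerivAt (fun s => F * g s) (F * g t * ξ t) t :=
  (hg.const_mul F).congr_deriv (Matrix.mul_assoc _ _ _).symm

lemma hasDerivAt_observerError {F b : Mat} {g ξ ξm Abar bbar : ℝ → Mat} {kP t : ℝ}
    (hFF : F * F⁻¹ = 1) (hξm : ξm t = ξ t + b) (hg : HasDerivAt g (g t * ξ t) t)
    (hAbar : HasDerivAt Abar (Abar t * ξm t - F * g t * bbar t + kP • (F * g t - Abar t)) t) :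
    HasDerivAt (fun s => F * (g s - F⁻¹ * Abar s)) (F * (g t - F⁻¹ * Abar t) * ξm t
      - F * g t * (b - bbar t) - kP • (F * (g t - F⁻¹ * Abar t))) t := by
  refine ((hg.sub (hAbar.const_mul F⁻¹)).const_mul F).congr_deriv ?_
  simp only [hξm, mul_sub, mul_add, sub_mul, ← Matrix.mul_assoc, hFF, Matrix.one_mul,
    mul_smul_comm]
  abel

end Matrices

theorem observer_I_group_error_GES_general {n : ℕ}
    (𝔤 : LieSubalgebra ℝ (Matrix (Fin n) (Fin n) ℝ))
    (proj : Matrix (Fin n) (Fin n) ℝ →ₗ[ℝ] Matrix (Fin n) (Fin n) ℝ)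
    (hproj_mem : ∀ X, proj X ∈ 𝔤)
    (hproj_orth : ∀ X, ∀ Y ∈ 𝔤, finner (X - proj X) Y = 0)
    (g ξ : ℝ → Matrix (Fin n) (Fin n) ℝ)
    (hg : ∀ t ≥ (0:ℝ), HasDerivAt g (g t * ξ t) t)
    (Bξ Bb Lg Ug : ℝ)
    (hLg : 0 < Lg)
    (hξbd : ∀ t ≥ (0:ℝ), ‖ξ t‖ ≤ Bξ)
    (hσ : ∀ t ≥ (0:ℝ), Lg ≤ sigmaMin (g t) ∧ sigmaMax (g t) ≤ Ug)
    (b : Matrix (Fin n) (Fin n) ℝ) (hbmem : b ∈ 𝔤) (hbbd : ‖b‖ ≤ Bb)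
    (ξm : ℝ → Matrix (Fin n) (Fin n) ℝ) (hξm : ∀ t, ξm t = ξ t + b)
    (F : Matrix (Fin n) (Fin n) ℝ) (hF : IsUnit F)
    (A : ℝ → Matrix (Fin n) (Fin n) ℝ)
    (hA : ∀ t ≥ (0:ℝ), A t = F * g t)
    (kP kI : ℝ) (hkP : Bξ + Bb < kP) (hkI : 0 < kI) :
    ∃ a > (0:ℝ), ∃ C > (0:ℝ),
      ∀ Abar bbar : ℝ → Matrix (Fin n) (Fin n) ℝ,
        (∀ t, bbar t ∈ 𝔤) →
        (∀ t ≥ (0:ℝ), HasDerivAt Abar (Abar t * ξm t - A t * bbar t + kP • (A t - Abar t)) t) →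
        (∀ t ≥ (0:ℝ), HasDerivAt bbar (-(kI • proj ((A t)ᵀ * (A t - Abar t)))) t) →
        ∀ t ≥ (0:ℝ),
          ‖g t - F⁻¹ * Abar t‖ + ‖b - bbar t‖ ≤
            C * (‖g 0 - F⁻¹ * Abar 0‖ + ‖b - bbar 0‖) * Real.exp (-(a * t)) := by
  have hdet := (Matrix.isUnit_iff_isUnit_det F).mp hF
  have hFF : F * F⁻¹ = 1 := Matrix.mul_nonsing_inv F hdet
  have hproj := starProjection_eq_of_finner_eq_zero 𝔤.toSubmodule hproj_mem hproj_orth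
  obtain ⟨a, ha, C, hC, hdecay⟩ := observerError_exp_decay (K := 𝔤.toSubmodule)
    (fun t ht => hasDerivAt_left_translate (F := F) (hg t ht))
    (fun t ht => norm_mul_le_of_sigmaMax_le (hσ t ht).2) (div_pos hLg (by positivity))
    (fun t ht => div_mul_norm_le_norm_mul_of_le_sigmaMin (Matrix.nonsing_inv_mul F hdet)
      (hσ t ht).1)
    hξbd (fun t ht => (hξm t ▸ norm_add_le _ _).trans (add_le_add (hξbd t ht) hbbd)) hkP hkI
  refine ⟨a, ha, max ‖F⁻¹‖ 1 * C * max ‖F‖ 1, by positivity,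
    fun Abar bbar hbbar hAbar hbbar' t ht => ?_⟩
  refine norm_add_le_of_norm_mul_add_le (E := fun s => g s - F⁻¹ * Abar s)
    (y := fun s => ‖b - bbar s‖) (Matrix.nonsing_inv_mul F hdet) hC.le (exp_pos _).le
    (fun _ => norm_nonneg _) ?_
  exact hdecay (fun s => F * (g s - F⁻¹ * Abar s)) (fun s => b - bbar s)
    (fun s _ => 𝔤.toSubmodule.sub_mem hbmem (hbbar s))
    (fun s hs => hasDerivAt_observerError hFF (hξm s) (hg s hs) (hA s hs ▸ hAbar s hs))
    (fun s hs => ((hasDerivAt_const s b).sub (hbbar' s hs)).congr_deriv <| by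
      simp only [hA s hs, hproj, mul_sub, ← Matrix.mul_assoc, hFF, Matrix.one_mul,
        sub_neg_eq_add, zero_add]) t ht

theorem observer_I_group_error_GES {n : ℕ}
    (𝔤 : LieSubalgebra ℝ (Matrix (Fin n) (Fin n) ℝ))
    (proj : Matrix (Fin n) (Fin n) ℝ →ₗ[ℝ] Matrix (Fin n) (Fin n) ℝ)
    (hproj_mem : ∀ X, proj X ∈ 𝔤)
    (hproj_id : ∀ X ∈ 𝔤, proj X = X)
    (hproj_orth : ∀ X, ∀ Y ∈ 𝔤, finner (X - proj X) Y = 0)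
    (g ξ : ℝ → Matrix (Fin n) (Fin n) ℝ)
    (hξmem : ∀ t, ξ t ∈ 𝔤)
    (hg : ∀ t ≥ (0:ℝ), HasDerivAt g (g t * ξ t) t)
    (Bξ Bb Lg Ug : ℝ)
    (hBξ : 0 < Bξ) (hBb : 0 < Bb) (hLg : 0 < Lg) (hUg : 0 < Ug)
    (hξbd : ∀ t ≥ (0:ℝ), ‖ξ t‖ ≤ Bξ)
    (hσ : ∀ t ≥ (0:ℝ), Lg ≤ sigmaMin (g t) ∧ sigmaMax (g t) ≤ Ug)
    (b : Matrix (Fin n) (Fin n) ℝ) (hbmem : b ∈ 𝔤) (hbbd : ‖b‖ ≤ Bb)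
    (ξm : ℝ → Matrix (Fin n) (Fin n) ℝ) (hξm : ∀ t, ξm t = ξ t + b)
    (F : Matrix (Fin n) (Fin n) ℝ) (hF : IsUnit F)
    (A : ℝ → Matrix (Fin n) (Fin n) ℝ)
    (hA : ∀ t ≥ (0:ℝ), A t = F * g t)
    (kP kI : ℝ) (hkP : Bξ + Bb < kP) (hkI : 0 < kI) :
    ∃ a > (0:ℝ), ∃ C > (0:ℝ),
      ∀ Abar bbar : ℝ → Matrix (Fin n) (Fin n) ℝ,
        (∀ t, bbar t ∈ 𝔤) →
        (∀ t ≥ (0:ℝ), HasDerivAt Abar (Abar t * ξm t - A t * bbar t + kP • (A t - Abar t)) t) →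
        (∀ t ≥ (0:ℝ), HasDerivAt bbar (-(kI • proj ((A t)ᵀ * (A t - Abar t)))) t) →
        ∀ t ≥ (0:ℝ),
          ‖g t - F⁻¹ * Abar t‖ + ‖b - bbar t‖ ≤
            C * (‖g 0 - F⁻¹ * Abar 0‖ + ‖b - bbar 0‖) * Real.exp (-(a * t)) :=
  observer_I_group_error_GES_general 𝔤 proj hproj_mem hproj_orth g ξ hg Bξ Bb Lg Ug hLg hξbd hσ b
    hbmem hbbd ξm hξm F hF A hA kP kI hkP hkI
end

section
/- Suppose A : [0,∞) → ℝ^{n×n} is differentiable with A(t) invertible for all t ≥ 0 and A'(t) = A(t) ξ(t) where ξ(t) ∈ 𝔤, let b ∈ 𝔤 be constant and ξ_m(t) = ξ(t) + b, and let (Ā, b̄) : [0,∞) → ℝ^{n×n} × 𝔤 be a differentiable solution of Ā'(t) = Ā(t) ξ_m(t) − A(t) b̄(t) + k_P (A(t) − Ā(t)) and b̄'(t) = −k_I π_𝔤(A(t)⁻¹ (A(t) − Ā(t))) for constants k_P, k_I. Then 𝓔_A(t) := I − A(t)⁻¹ Ā(t) and e_b(t) := b − b̄(t) satisfy 𝓔_A'(t)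 = 𝓔_A(t) ξ_m(t) − ξ(t) 𝓔_A(t) − e_b(t) − k_P 𝓔_A(t) and e_b'(t) = k_I π_𝔤(𝓔_A(t)) for all t ≥ 0. -/
/-!
Along `A' = A ξ` the inverse satisfies `(A⁻¹)' = -ξ A⁻¹`, so the error `E = 1 - A⁻¹ Ā` obeys
`E' = ξ (1 - E) - A⁻¹ Ā'`. Substituting the observer equation, `A⁻¹ Ā' = (1 - E) ξ_m - b̄ + k_P E`,
and `ξ_m = ξ + b` turns this into the stated dynamics; the equation for `e_b` is immediate once
`A⁻¹ (A - Ā) = E` is observed.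
-/

open Matrix

attribute [local instance] Matrix.frobeniusNormedAddCommGroup Matrix.frobeniusNormedSpace
attribute [local instance 100] LieRing.ofAssociativeRing

section RingInverse

variable {𝕜 R : Type*} [NontriviallyNormedField 𝕜] [NormedRing R] [HasSummableGeomSeries R]
  [NormedAlgebra 𝕜 R]

theorem HasDerivAt.ringInverse {f : 𝕜 → R} {f' : R} {t : 𝕜} (hf : HasDerivAt f f' t)
    (ht : IsUnit (f t)) :
    HasDerivAt (fun s => Ring.inverse (f s))
      (-(Ring.inverse (f t) * f' * Ring.inverse (f t))) t := by
  obtain ⟨u, hu⟩ := ht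
  have hinv := hasFDerivAt_ringInverse (𝕜 := 𝕜) u
  rw [hu] at hinv
  rw [← hu, Ring.inverse_unit]
  exact hinv.comp_hasDerivAt t hf

end RingInverse

section MatrixInverse

attribute [local instance] Matrix.frobeniusNormedRing Matrix.frobeniusNormedAlgebra

variable {m 𝕜 : Type*} [Fintype m] [DecidableEq m] [RCLike 𝕜]

theorem HasDerivAt.matrix_inv {A : 𝕜 → Matrix m m 𝕜} {A' : Matrix m m 𝕜} {t : 𝕜}
    (hA : HasDerivAt A A' t) (ht : IsUnit (A t)) :
    HasDerivAt (fun s => (A s)⁻¹) (-((A t)⁻¹ * A' * (A t)⁻¹)) t := by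
  have h := hA.ringInverse ht
  simp only [← Matrix.nonsing_inv_eq_ringInverse] at h
  exact h

theorem hasDerivAt_one_sub_inv_mul {A Ā : 𝕜 → Matrix m m 𝕜} {ξ Ā' : Matrix m m 𝕜} {t : 𝕜}
    (hA : HasDerivAt A (A t * ξ) t) (ht : IsUnit (A t)) (hĀ : HasDerivAt Ā Ā' t) :
    HasDerivAt (fun s => 1 - (A s)⁻¹ * Ā s) (ξ * ((A t)⁻¹ * Ā t) - (A t)⁻¹ * Ā') t := by
  have hcancel : (A t)⁻¹ * (A t * ξ) = ξ := (A t).nonsing_inv_mul_cancel_left ξ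
    ((A t).isUnit_iff_isUnit_det.mp ht)
  refine ((hasDerivAt_const t 1).sub ((hA.matrix_inv ht).mul hĀ)).congr_deriv ?_
  rw [hcancel]
  noncomm_ring

end MatrixInverse

theorem observer_variant_I_error_dynamics_general {n : ℕ}
    (proj : Matrix (Fin n) (Fin n) ℝ →ₗ[ℝ] Matrix (Fin n) (Fin n) ℝ)
    (ξ : ℝ → Matrix (Fin n) (Fin n) ℝ)
    (A : ℝ → Matrix (Fin n) (Fin n) ℝ)
    (hAinv : ∀ t ≥ (0:ℝ), IsUnit (A t))
    (hA : ∀ t ≥ (0:ℝ), HasDerivAt A (A t * ξ t) t)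
    (b : Matrix (Fin n) (Fin n) ℝ)
    (ξm : ℝ → Matrix (Fin n) (Fin n) ℝ) (hξm : ∀ t, ξm t = ξ t + b)
    (kP kI : ℝ)
    (Abar bbar : ℝ → Matrix (Fin n) (Fin n) ℝ)
    (hAbar : ∀ t ≥ (0:ℝ), HasDerivAt Abar (Abar t * ξm t - A t * bbar t + kP • (A t - Abar t)) t)
    (hbbar : ∀ t ≥ (0:ℝ), HasDerivAt bbar (-(kI • proj ((A t)⁻¹ * (A t - Abar t)))) t) :
    ∀ t ≥ (0:ℝ),
      HasDerivAt (fun s => 1 - (A s)⁻¹ * Abar s)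
        ((1 - (A t)⁻¹ * Abar t) * ξm t - ξ t * (1 - (A t)⁻¹ * Abar t)
          - (b - bbar t) - kP • (1 - (A t)⁻¹ * Abar t)) t ∧
      HasDerivAt (fun s => b - bbar s) (kI • proj (1 - (A t)⁻¹ * Abar t)) t := by
  intro t ht
  have hdet : IsUnit (A t).det := (A t).isUnit_iff_isUnit_det.mp (hAinv t ht)
  have hinv_mul_sub : (A t)⁻¹ * (A t - Abar t) = 1 - (A t)⁻¹ * Abar t := by
    rw [Matrix.mul_sub, nonsing_inv_mul _ hdet]
  have hinv_mul_deriv : (A t)⁻¹ * (Abar t * ξm t - A t * bbar t + kP • (A t - Abar t)) =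
      (A t)⁻¹ * Abar t * ξm t - bbar t + kP • (1 - (A t)⁻¹ * Abar t) := by
    rw [mul_add, mul_sub, ← mul_assoc, nonsing_inv_mul_cancel_left _ _ hdet, mul_smul_comm,
      hinv_mul_sub]
  constructor
  · refine (hasDerivAt_one_sub_inv_mul (hA t ht) (hAinv t ht) (hAbar t ht)).congr_deriv ?_
    rw [hinv_mul_deriv, hξm]
    noncomm_ring
  · refine ((hasDerivAt_const t b).sub (hbbar t ht)).congr_deriv ?_
    rw [zero_sub, neg_neg, hinv_mul_sub]

theorem observer_variant_I_error_dynamics {n : ℕ}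
    (𝔤 : LieSubalgebra ℝ (Matrix (Fin n) (Fin n) ℝ))
    (proj : Matrix (Fin n) (Fin n) ℝ →ₗ[ℝ] Matrix (Fin n) (Fin n) ℝ)
    (hproj_mem : ∀ X, proj X ∈ 𝔤)
    (hproj_id : ∀ X ∈ 𝔤, proj X = X)
    (hproj_orth : ∀ X, ∀ Y ∈ 𝔤, finner (X - proj X) Y = 0)
    (ξ : ℝ → Matrix (Fin n) (Fin n) ℝ) (hξmem : ∀ t, ξ t ∈ 𝔤)
    (A : ℝ → Matrix (Fin n) (Fin n) ℝ)
    (hAinv : ∀ t ≥ (0:ℝ), IsUnit (A t))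
    (hA : ∀ t ≥ (0:ℝ), HasDerivAt A (A t * ξ t) t)
    (b : Matrix (Fin n) (Fin n) ℝ) (hbmem : b ∈ 𝔤)
    (ξm : ℝ → Matrix (Fin n) (Fin n) ℝ) (hξm : ∀ t, ξm t = ξ t + b)
    (kP kI : ℝ)
    (Abar bbar : ℝ → Matrix (Fin n) (Fin n) ℝ)
    (hbbar_mem : ∀ t, bbar t ∈ 𝔤)
    (hAbar : ∀ t ≥ (0:ℝ), HasDerivAt Abar (Abar t * ξm t - A t * bbar t + kP • (A t - Abar t)) t)
    (hbbar : ∀ t ≥ (0:ℝ), HasDerivAt bbar (-(kI • proj ((A t)⁻¹ * (A t - Abar t)))) t) :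
    ∀ t ≥ (0:ℝ),
      HasDerivAt (fun s => 1 - (A s)⁻¹ * Abar s)
        ((1 - (A t)⁻¹ * Abar t) * ξm t - ξ t * (1 - (A t)⁻¹ * Abar t)
          - (b - bbar t) - kP • (1 - (A t)⁻¹ * Abar t)) t ∧
      HasDerivAt (fun s => b - bbar s) (kI • proj (1 - (A t)⁻¹ * Abar t)) t :=
  observer_variant_I_error_dynamics_general proj ξ A hAinv hA b ξm hξm kP kI Abar bbar hAbar hbbar
end

section
/- Let k_P, k_I, B_ξ, B_b, L, U, f, λ be positive constants with k_P > B_ξ + B_b, and set H = 4 (k_P − B_ξ − B_b) L² λ / ((4 k_I L² λ + (k_P + B_b + 2 B_ξ)²) U² f²). Then for every ε with 0 < ε < H, the quadratic form on ℝ² given by V₃(x, y) = (k_P − (B_ξ + B_b) − ε k_I U² f²) x² + ε λ L² y² − ε (k_P + B_b + 2 B_ξ) U f x y is positive definite, i.e. V₃(x, y) > 0 for all (x, y) ≠ (0, 0). -/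
/-! A binary quadratic form with positive `y²`-coefficient and negative discriminant is positive
definite. Writing `H = N / D`, the discriminant of `V₃` is `ε · (ε D - N)`, negative exactly when
`0 < ε < H`. -/

theorem quadratic_form_pos_of_discrim_neg {K : Type*} [Field K] [LinearOrder K]
    [IsStrictOrderedRing K] {a b c : K} (hc : 0 < c) (hdisc : b ^ 2 < 4 * a * c) {x y : K}
    (hxy : (x, y) ≠ (0, 0)) :
    0 < a * x ^ 2 + c * y ^ 2 - b * x * y := by
  have hcomplete : 4 * c * (a * x ^ 2 + c * y ^ 2 - b * x * y)
      = (2 * c * y - b * x) ^ 2 + (4 * a * c - b ^ 2) * x ^ 2 := by ring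
  rcases eq_or_ne x 0 with rfl | hx
  · have hy : y ≠ 0 := by simpa using hxy
    have : 0 < y ^ 2 := by positivity
    simpa using mul_pos hc this
  · have : 0 < 4 * c * (a * x ^ 2 + c * y ^ 2 - b * x * y) := by
      rw [hcomplete]
      exact add_pos_of_nonneg_of_pos (sq_nonneg _) (mul_pos (sub_pos.mpr hdisc) (by positivity))
    exact pos_of_mul_pos_right this (by positivity)

theorem V3_pos_def_general (kP kI Bξ Bb L U f lam : ℝ)
    (hkI : 0 < kI)
    (hL : 0 < L) (hU : 0 < U) (hf : 0 < f) (hlam : 0 < lam)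
    (H : ℝ)
    (hH : H = 4 * (kP - Bξ - Bb) * L ^ 2 * lam /
      ((4 * kI * L ^ 2 * lam + (kP + Bb + 2 * Bξ) ^ 2) * U ^ 2 * f ^ 2))
    (ε : ℝ) (hε : 0 < ε) (hεH : ε < H) :
    ∀ x y : ℝ, (x, y) ≠ (0, 0) →
      0 < (kP - (Bξ + Bb) - ε * kI * U ^ 2 * f ^ 2) * x ^ 2
          + ε * lam * L ^ 2 * y ^ 2
          - ε * (kP + Bb + 2 * Bξ) * U * f * x * y := by
  intro x y hxy
  have hD : 0 < (4 * kI * L ^ 2 * lam + (kP + Bb + 2 * Bξ) ^ 2) * U ^ 2 * f ^ 2 := by positivity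
  have hεD := (lt_div_iff₀ hD).mp (hH ▸ hεH)
  refine quadratic_form_pos_of_discrim_neg (by positivity) ?_ hxy
  have hdisc : 4 * (kP - (Bξ + Bb) - ε * kI * U ^ 2 * f ^ 2) * (ε * lam * L ^ 2)
        - (ε * (kP + Bb + 2 * Bξ) * U * f) ^ 2
      = ε * (4 * (kP - Bξ - Bb) * L ^ 2 * lam
        - ε * ((4 * kI * L ^ 2 * lam + (kP + Bb + 2 * Bξ) ^ 2) * U ^ 2 * f ^ 2)) := by ring
  linarith [mul_pos hε (sub_pos.mpr hεD)]

theorem V3_pos_def (kP kI Bξ Bb L U f lam : ℝ)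
    (hkP0 : 0 < kP) (hkI : 0 < kI) (hBξ : 0 < Bξ) (hBb : 0 < Bb)
    (hL : 0 < L) (hU : 0 < U) (hf : 0 < f) (hlam : 0 < lam)
    (hkP : Bξ + Bb < kP)
    (H : ℝ)
    (hH : H = 4 * (kP - Bξ - Bb) * L ^ 2 * lam /
      ((4 * kI * L ^ 2 * lam + (kP + Bb + 2 * Bξ) ^ 2) * U ^ 2 * f ^ 2))
    (ε : ℝ) (hε : 0 < ε) (hεH : ε < H) :
    ∀ x y : ℝ, (x, y) ≠ (0, 0) →
      0 < (kP - (Bξ + Bb) - ε * kI * U ^ 2 * f ^ 2) * x ^ 2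
          + ε * lam * L ^ 2 * y ^ 2
          - ε * (kP + Bb + 2 * Bξ) * U * f * x * y :=
  V3_pos_def_general kP kI Bξ Bb L U f lam hkI hL hU hf hlam H hH ε hε hεH
end
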